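/- arXiv:2001.01577 — 8 statements merged into one kernel-verified Lean document; each statement's English description precedes it below -/
import Mathlib

section
/- In the finite options-framework model, let h = (s_0,a_0,…,s_{t-1},a_{t-1},s_t) be a trajectory of length t ≥ 1 with Pr(H_t = h) > 0. Then the conditional probability that the option active during the last step terminates at s_t satisfies Pr(T_t = 1 | H_t = h) = (∑_{o ∈ O} β_o(s_t)·μ_o(s_{t-1},a_{t-1})·F_{t-1}(o)) / (∑_{o' ∈ O} μ_{o'}(s_{t-1},a_{t-1})·F_{t-1}(o')). -/
/-!
Finite options-framework model.

We fix finite nonempty types `S` (states), `A` (actions), `O` (options), an initial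
distribution `d0`, a policy over options `po`, option policies `mu`, termination
functions `beta`, and a transition function `P`.  A trajectory of length `n+1` is
given by its states `s : ℕ → S` and actions `a : ℕ → A` (only indices `0..n+1`
resp. `0..n` are relevant).  Latent option sequences are `op : Fin (n+1) → O`
(for `o_0,…,o_n`) and termination sequences `τ : Fin n → Bool` (for `τ_1,…,τ_n`,
where `τ j` corresponds to time `j+1`).
-/

open Finset

namespace OptionsModel

variable {S A O : Type} [Fintype S] [Fintype A] [Fintype O]
  [Nonempty S] [Nonempty A] [Nonempty O] [DecidableEq O]

/-- Selection factor `c_{j+1}`: if the previous option `o_j = op j.castSucc` terminates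
(`τ (j+1) = 1`) at `s_{j+1}`, a new option `o_{j+1} = op j.succ` is selected by the
policy over options; otherwise the option continues. -/
def sel (po : S → O → ℝ) (beta : O → S → ℝ) (s : ℕ → S)
    {k : ℕ} (op : Fin (k + 1) → O) (τ : Fin k → Bool) (j : Fin k) : ℝ :=
  if τ j then beta (op j.castSucc) (s (j.1 + 1)) * po (s (j.1 + 1)) (op j.succ)
  else if op j.succ = op j.castSucc then 1 - beta (op j.castSucc) (s (j.1 + 1)) else 0

/-- Latent weight `w(h,(o_i),(τ_i))` of a trajectory of length `n+1` together with the
latent option sequence `o_0,…,o_n` and termination sequence `τ_1,…,τ_n`. -/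
def w (d0 : S → ℝ) (po : S → O → ℝ) (mu : O → S → A → ℝ) (beta : O → S → ℝ)
    (P : S → A → S → ℝ) (s : ℕ → S) (a : ℕ → A) {n : ℕ}
    (op : Fin (n + 1) → O) (τ : Fin n → Bool) : ℝ :=
  d0 (s 0) * po (s 0) (op 0) * mu (op 0) (s 0) (a 0)
    * (∏ j : Fin n, P (s j.1) (a j.1) (s (j.1 + 1)) * sel po beta s op τ j
        * mu (op j.succ) (s (j.1 + 1)) (a (j.1 + 1)))
    * P (s n) (a n) (s (n + 1))

/-- Trajectory probability `Pr(H_t = h)` for the trajectory of length `t = n+1`. -/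
def prH (d0 : S → ℝ) (po : S → O → ℝ) (mu : O → S → A → ℝ) (beta : O → S → ℝ)
    (P : S → A → S → ℝ) (s : ℕ → S) (a : ℕ → A) (n : ℕ) : ℝ :=
  ∑ op : Fin (n + 1) → O, ∑ τ : Fin n → Bool, w d0 po mu beta P s a op τ

/-- Joint termination probability `Pr(T_t = 1, H_t = h)` for `t = n+1`. -/
def prT1H (d0 : S → ℝ) (po : S → O → ℝ) (mu : O → S → A → ℝ) (beta : O → S → ℝ)
    (P : S → A → S → ℝ) (s : ℕ → S) (a : ℕ → A) (n : ℕ) : ℝ :=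
  ∑ op : Fin (n + 1) → O, ∑ τ : Fin n → Bool,
    w d0 po mu beta P s a op τ * beta (op (Fin.last n)) (s (n + 1))

/-- Joint no-termination probability `Pr(T_t = 0, H_t = h)` for `t = n+1`. -/
def prT0H (d0 : S → ℝ) (po : S → O → ℝ) (mu : O → S → A → ℝ) (beta : O → S → ℝ)
    (P : S → A → S → ℝ) (s : ℕ → S) (a : ℕ → A) (n : ℕ) : ℝ :=
  ∑ op : Fin (n + 1) → O, ∑ τ : Fin n → Bool,
    w d0 po mu beta P s a op τ * (1 - beta (op (Fin.last n)) (s (n + 1)))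

/-- `Pr(O_{t-1} = o, H_t = h)` for `t = n+1`: the latent-weight sum restricted to option
sequences whose last option `o_{t-1}` equals `o`. -/
def prOlastH (d0 : S → ℝ) (po : S → O → ℝ) (mu : O → S → A → ℝ) (beta : O → S → ℝ)
    (P : S → A → S → ℝ) (s : ℕ → S) (a : ℕ → A) (n : ℕ) (o : O) : ℝ :=
  ∑ op : Fin (n + 1) → O, ∑ τ : Fin n → Bool,
    if op (Fin.last n) = o then w d0 po mu beta P s a op τ else 0

/-- The forward variable `F_m(o)`: `F_0(o) = d0(s_0)·π(s_0,o)` and, for `m ≥ 1`, the sum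
over option sequences `o_0,…,o_m` with `o_m = o` and termination sequences `τ_1,…,τ_m`
of `d0(s_0)·π(s_0,o_0)·(∏_{i=0}^{m-1} μ_{o_i}(s_i,a_i)·P(s_i,a_i,s_{i+1}))·(∏_{i=1}^m c_i)`. -/
def fwd (d0 : S → ℝ) (po : S → O → ℝ) (mu : O → S → A → ℝ) (beta : O → S → ℝ)
    (P : S → A → S → ℝ) (s : ℕ → S) (a : ℕ → A) : ℕ → O → ℝ
  | 0, o => d0 (s 0) * po (s 0) o
  | m + 1, o =>
    ∑ op : Fin (m + 2) → O, ∑ τ : Fin (m + 1) → Bool,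
      if op (Fin.last (m + 1)) = o then
        d0 (s 0) * po (s 0) (op 0)
          * (∏ j : Fin (m + 1),
              mu (op j.castSucc) (s j.1) (a j.1) * P (s j.1) (a j.1) (s (j.1 + 1)))
          * (∏ j : Fin (m + 1), sel po beta s op τ j)
      else 0

/-- `Pr(O_t = o, T_t = 0, H_t = h_t)` for `t = n+1`: the `F_t(o)` sum restricted to
termination sequences with `τ_t = 0`. -/
def prOT0H (d0 : S → ℝ) (po : S → O → ℝ) (mu : O → S → A → ℝ) (beta : O → S → ℝ)
    (P : S → A → S → ℝ) (s : ℕ → S) (a : ℕ → A) (n : ℕ) (o : O) : ℝ :=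
  ∑ op : Fin (n + 2) → O, ∑ τ : Fin (n + 1) → Bool,
    if op (Fin.last (n + 1)) = o ∧ τ (Fin.last n) = false then
      d0 (s 0) * po (s 0) (op 0)
        * (∏ j : Fin (n + 1),
            mu (op j.castSucc) (s j.1) (a j.1) * P (s j.1) (a j.1) (s (j.1 + 1)))
        * (∏ j : Fin (n + 1), sel po beta s op τ j)
    else 0

/-- The recursive function `f(h,o,i)` of Theorem 2: `f(h,o,i) = 1` for `i ≥ t` and
otherwise the termination/continuation recursion. -/
def fRec (po : S → O → ℝ) (mu : O → S → A → ℝ) (beta : O → S → ℝ)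
    (s : ℕ → S) (a : ℕ → A) (t : ℕ) (o : O) (i : ℕ) : ℝ :=
  if h : t ≤ i then 1
  else
    beta o (s i) * (∑ o' : O, po (s i) o' * mu o' (s i) (a i) * fRec po mu beta s a t o' (i + 1))
      + (1 - beta o (s i)) * mu o (s i) (a i) * fRec po mu beta s a t o (i + 1)
termination_by t - i
decreasing_by all_goals omega

/-- The option active at time `i + j - 1` just before choosing `o_{i+j}`: it is `o` when
`j = 0` (the given previous option) and `op (j-1)` otherwise. -/
def prevOp {k : ℕ} (o : O) (op : Fin k → O) (j : Fin k) : O :=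
  if _ : j.1 = 0 then o else op ⟨j.1 - 1, Nat.lt_of_le_of_lt (Nat.sub_le _ _) j.2⟩

/-- Suffix probability `G(h,o,i)` for `1 ≤ i ≤ t`: the probability of generating
`(s_i,a_i,…,s_t)` given previous state `s_{i-1}`, active option `o` and previous action
`a_{i-1}`.  For `i = t` it is `P(s_{t-1},a_{t-1},s_t)`; for `i < t` it is the sum over
latent option sequences `o_i,…,o_{t-1}` and termination indicators `τ_i,…,τ_{t-1}`
(with `o_{i-1} := o`) of `(∏_{j=i}^{t-1} P(s_{j-1},a_{j-1},s_j)·c_j·μ_{o_j}(s_j,a_j))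
· P(s_{t-1},a_{t-1},s_t)`. -/
def G (po : S → O → ℝ) (mu : O → S → A → ℝ) (beta : O → S → ℝ)
    (P : S → A → S → ℝ) (s : ℕ → S) (a : ℕ → A) (t i : ℕ) (o : O) : ℝ :=
  if i < t then
    ∑ op : Fin (t - i) → O, ∑ τ : Fin (t - i) → Bool,
      (∏ j : Fin (t - i),
          P (s (i + j.1 - 1)) (a (i + j.1 - 1)) (s (i + j.1))
            * (if τ j then
                beta (prevOp o op j) (s (i + j.1)) * po (s (i + j.1)) (op j)
              else if op j = prevOp o op j then 1 - beta (prevOp o op j) (s (i + j.1))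
              else 0)
            * mu (op j) (s (i + j.1)) (a (i + j.1)))
        * P (s (t - 1)) (a (t - 1)) (s t)
  else P (s (t - 1)) (a (t - 1)) (s t)

variable (d0 : S → ℝ) (po : S → O → ℝ) (mu : O → S → A → ℝ)
  (beta : O → S → ℝ) (P : S → A → S → ℝ) (s : ℕ → S) (a : ℕ → A)

lemma sum_w_mul (n : ℕ) (φ : O → ℝ) :
    (∑ op : Fin (n + 1) → O, ∑ τ : Fin n → Bool,
        w d0 po mu beta P s a op τ * φ (op (Fin.last n)))
      = P (s n) (a n) (s (n + 1))
          * ∑ o : O, φ o * (mu o (s n) (a n) * fwd d0 po mu beta P s a n o) := by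
  cases n with
  | zero =>
      rw [Finset.mul_sum]
      refine Fintype.sum_equiv (Equiv.funUnique (Fin 1) O) _ _ fun op => ?_
      simp [w, fwd, Equiv.funUnique, Fintype.sum_unique]
      ring
  | succ m =>
      have key : ∀ (op : Fin (m + 2) → O) (τ : Fin (m + 1) → Bool),
          w d0 po mu beta P s a op τ
            = d0 (s 0) * po (s 0) (op 0)
                * (∏ j : Fin (m + 1),
                    mu (op j.castSucc) (s j.1) (a j.1) * P (s j.1) (a j.1) (s (j.1 + 1)))
                * (∏ j : Fin (m + 1), sel po beta s op τ j)
                * mu (op (Fin.last (m + 1))) (s (m + 1)) (a (m + 1))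
                * P (s (m + 1)) (a (m + 1)) (s (m + 2)) := by
        intro op τ
        have hg : mu (op 0) (s 0) (a 0)
              * ∏ j : Fin (m + 1), mu (op j.succ) (s (j.1 + 1)) (a (j.1 + 1))
            = (∏ j : Fin (m + 1), mu (op j.castSucc) (s j.1) (a j.1))
                * mu (op (Fin.last (m + 1))) (s (m + 1)) (a (m + 1)) := by
          calc mu (op 0) (s 0) (a 0)
                * ∏ j : Fin (m + 1), mu (op j.succ) (s (j.1 + 1)) (a (j.1 + 1))
              = ∏ k : Fin (m + 2), mu (op k) (s k.1) (a k.1) :=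
                (Fin.prod_univ_succ fun k => mu (op k) (s k.1) (a k.1)).symm
            _ = _ := Fin.prod_univ_castSucc fun k => mu (op k) (s k.1) (a k.1)
        simp only [w, Finset.prod_mul_distrib]
        linear_combination (d0 (s 0) * po (s 0) (op 0)
            * (∏ j : Fin (m + 1), P (s j.1) (a j.1) (s (j.1 + 1)))
            * (∏ j : Fin (m + 1), sel po beta s op τ j)
            * P (s (m + 1)) (a (m + 1)) (s (m + 2))) * hg
      calc (∑ op : Fin (m + 2) → O, ∑ τ : Fin (m + 1) → Bool,
              w d0 po mu beta P s a op τ * φ (op (Fin.last (m + 1))))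
          = ∑ op : Fin (m + 2) → O, ∑ τ : Fin (m + 1) → Bool,
              P (s (m + 1)) (a (m + 1)) (s (m + 2)) * (φ (op (Fin.last (m + 1)))
                * (mu (op (Fin.last (m + 1))) (s (m + 1)) (a (m + 1))
                  * (d0 (s 0) * po (s 0) (op 0)
                      * (∏ j : Fin (m + 1),
                          mu (op j.castSucc) (s j.1) (a j.1)
                            * P (s j.1) (a j.1) (s (j.1 + 1)))
                      * (∏ j : Fin (m + 1), sel po beta s op τ j)))) := by
            refine Finset.sum_congr rfl fun op _ => Finset.sum_congr rfl fun τ _ => ?_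
            rw [key op τ]; ring
        _ = _ := by
            symm
            simp only [fwd, Finset.mul_sum, mul_ite, mul_zero]
            conv_lhs => rw [Finset.sum_comm]
            refine Finset.sum_congr rfl fun op _ => ?_
            conv_lhs => rw [Finset.sum_comm]
            refine Finset.sum_congr rfl fun τ _ => ?_
            rw [Finset.sum_ite_eq]
            simp

/-- For a trajectory `h` of length `t = n+1 ≥ 1` with `Pr(H_t = h) > 0`,
`Pr(T_t = 1 | H_t = h) = (∑_o β_o(s_t)·μ_o(s_{t-1},a_{t-1})·F_{t-1}(o)) /
(∑_o' μ_o'(s_{t-1},a_{t-1})·F_{t-1}(o'))`. -/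
theorem conditional_termination_prob_eq
    (hd0 : ∀ x, 0 ≤ d0 x) (hd0s : ∑ x : S, d0 x = 1)
    (hpo : ∀ x o, 0 ≤ po x o) (hpos : ∀ x : S, ∑ o : O, po x o = 1)
    (hmu : ∀ o x u, 0 ≤ mu o x u) (hmus : ∀ o x, ∑ u : A, mu o x u = 1)
    (hbeta : ∀ o x, 0 ≤ beta o x ∧ beta o x ≤ 1)
    (hP : ∀ x u y, 0 ≤ P x u y) (hPs : ∀ x u, ∑ y : S, P x u y = 1)
    (n : ℕ) (hH : 0 < prH d0 po mu beta P s a n) :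
    prT1H d0 po mu beta P s a n / prH d0 po mu beta P s a n =
      (∑ o : O, beta o (s (n + 1)) * (mu o (s n) (a n) * fwd d0 po mu beta P s a n o)) /
        (∑ o' : O, mu o' (s n) (a n) * fwd d0 po mu beta P s a n o') := by
  have h1 : prT1H d0 po mu beta P s a n
      = P (s n) (a n) (s (n + 1))
          * ∑ o : O, beta o (s (n + 1)) * (mu o (s n) (a n) * fwd d0 po mu beta P s a n o) :=
    sum_w_mul d0 po mu beta P s a n (fun o => beta o (s (n + 1)))
  have h2 : prH d0 po mu beta P s a n
      = P (s n) (a n) (s (n + 1))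
          * ∑ o : O, mu o (s n) (a n) * fwd d0 po mu beta P s a n o := by
    have := sum_w_mul d0 po mu beta P s a n (fun _ => (1 : ℝ))
    simpa [prH] using this
  have hPe : P (s n) (a n) (s (n + 1)) ≠ 0 := by
    intro h
    rw [h2, h, zero_mul] at hH
    exact lt_irrefl 0 hH
  rw [h1, h2, mul_div_mul_left _ _ hPe]

end OptionsModel
end

section
/- In the finite options-framework model, for every trajectory h of length t ≥ 1 and every option o ∈ O, the joint probability of observing h with last active option o factorizes through the forward variable: Pr(O_{t-1} = o, H_t = h) = P(s_{t-1},a_{t-1},s_t)·μ_o(s_{t-1},a_{t-1})·F_{t-1}(o). -/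
/-!
Finite options-framework model.

We fix finite nonempty types `S` (states), `A` (actions), `O` (options), an initial
distribution `d0`, a policy over options `po`, option policies `mu`, termination
functions `beta`, and a transition function `P`.  A trajectory of length `n+1` is
given by its states `s : ℕ → S` and actions `a : ℕ → A` (only indices `0..n+1`
resp. `0..n` are relevant).  Latent option sequences are `op : Fin (n+1) → O`
(for `o_0,…,o_n`) and termination sequences `τ : Fin n → Bool` (for `τ_1,…,τ_n`,
where `τ j` corresponds to time `j+1`).
-/

open Finset

namespace OptionsModel

variable {S A O : Type} [Fintype S] [Fintype A] [Fintype O]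
  [Nonempty S] [Nonempty A] [Nonempty O] [DecidableEq O]

variable (d0 : S → ℝ) (po : S → O → ℝ) (mu : O → S → A → ℝ)
  (beta : O → S → ℝ) (P : S → A → S → ℝ) (s : ℕ → S) (a : ℕ → A)

/-- For every trajectory of length `t = n+1 ≥ 1` and every option `o`,
`Pr(O_{t-1} = o, H_t = h) = P(s_{t-1},a_{t-1},s_t)·μ_o(s_{t-1},a_{t-1})·F_{t-1}(o)`. -/
theorem joint_last_option_forward
    (hd0 : ∀ x, 0 ≤ d0 x) (hd0s : ∑ x : S, d0 x = 1)
    (hpo : ∀ x o, 0 ≤ po x o) (hpos : ∀ x : S, ∑ o : O, po x o = 1)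
    (hmu : ∀ o x u, 0 ≤ mu o x u) (hmus : ∀ o x, ∑ u : A, mu o x u = 1)
    (hbeta : ∀ o x, 0 ≤ beta o x ∧ beta o x ≤ 1)
    (hP : ∀ x u y, 0 ≤ P x u y) (hPs : ∀ x u, ∑ y : S, P x u y = 1)
    (n : ℕ) (o : O) :
    prOlastH d0 po mu beta P s a n o =
      P (s n) (a n) (s (n + 1)) * mu o (s n) (a n) * fwd d0 po mu beta P s a n o := by
  cases n with
  | zero =>
    simp only [prOlastH, fwd, w]
    rw [Finset.sum_eq_single (fun _ : Fin 1 => o)]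
    · simp only [Finset.univ_unique, Finset.sum_singleton, Finset.prod_empty]
      simp only [if_true, Fin.prod_univ_zero]
      ring
    · intro b _ hb
      have hbo : b 0 ≠ o := fun h => hb (funext fun i => by
        rw [Subsingleton.elim i 0, h])
      simp [hbo]
    · intro h; exact absurd (Finset.mem_univ _) h
  | succ m =>
    simp only [prOlastH, fwd, Finset.mul_sum]
    refine Finset.sum_congr rfl fun op _ => Finset.sum_congr rfl fun t _ => ?_
    simp only [mul_ite, mul_zero]
    by_cases hop : op (Fin.last (m + 1)) = o
    · simp only [hop, if_true, w]
      have hc := Fin.prod_univ_castSucc (f := fun k : Fin (m + 2) => mu (op k) (s k.1) (a k.1))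
      have hs := Fin.prod_univ_succ (f := fun k : Fin (m + 2) => mu (op k) (s k.1) (a k.1))
      simp only [Fin.coe_castSucc, Fin.val_succ, Fin.val_last, Fin.val_zero] at hc hs
      have h1 : (∏ j : Fin (m + 1), mu (op j.castSucc) (s j.1) (a j.1))
            * mu o (s (m + 1)) (a (m + 1))
          = mu (op 0) (s 0) (a 0)
            * ∏ j : Fin (m + 1), mu (op j.succ) (s (j.1 + 1)) (a (j.1 + 1)) := by
        rw [← hop, ← hc, hs]
      simp only [Finset.prod_mul_distrib]
      calc d0 (s 0) * po (s 0) (op 0) * mu (op 0) (s 0) (a 0)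
            * ((∏ j : Fin (m+1), P (s j.1) (a j.1) (s (j.1 + 1)))
              * (∏ j : Fin (m+1), sel po beta s op t j)
              * ∏ j : Fin (m+1), mu (op j.succ) (s (j.1 + 1)) (a (j.1 + 1)))
            * P (s (m + 1)) (a (m + 1)) (s (m + 1 + 1))
          = (mu (op 0) (s 0) (a 0)
              * ∏ j : Fin (m+1), mu (op j.succ) (s (j.1 + 1)) (a (j.1 + 1)))
            * (d0 (s 0) * po (s 0) (op 0)
              * (∏ j : Fin (m+1), P (s j.1) (a j.1) (s (j.1 + 1)))
              * (∏ j : Fin (m+1), sel po beta s op t j)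
              * P (s (m + 1)) (a (m + 1)) (s (m + 1 + 1))) := by ring
        _ = _ := by rw [← h1]; ring
    · simp [hop]

end OptionsModel
end

section
/- In the finite options-framework model, let h be a trajectory of length t ≥ 1 with Pr(H_t = h) > 0. Then the posterior over the option active during the last step is given by the Bayes normalization Pr(O_{t-1} = o | H_t = h) = μ_o(s_{t-1},a_{t-1})·F_{t-1}(o) / (∑_{o' ∈ O} μ_{o'}(s_{t-1},a_{t-1})·F_{t-1}(o')), where Pr(O_{t-1} = o | H_t = h) := Pr(O_{t-1} = o, H_t = h)/Pr(H_t = h); in particular, this posterior does not depend on the final transition to s_t. -/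
/-!
Finite options-framework model.

We fix finite nonempty types `S` (states), `A` (actions), `O` (options), an initial
distribution `d0`, a policy over options `po`, option policies `mu`, termination
functions `beta`, and a transition function `P`.  A trajectory of length `n+1` is
given by its states `s : ℕ → S` and actions `a : ℕ → A` (only indices `0..n+1`
resp. `0..n` are relevant).  Latent option sequences are `op : Fin (n+1) → O`
(for `o_0,…,o_n`) and termination sequences `τ : Fin n → Bool` (for `τ_1,…,τ_n`,
where `τ j` corresponds to time `j+1`).
-/

open Finset

namespace OptionsModel

variable {S A O : Type} [Fintype S] [Fintype A] [Fintype O]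
  [Nonempty S] [Nonempty A] [Nonempty O] [DecidableEq O]

variable (d0 : S → ℝ) (po : S → O → ℝ) (mu : O → S → A → ℝ)
  (beta : O → S → ℝ) (P : S → A → S → ℝ) (s : ℕ → S) (a : ℕ → A)


lemma prOlastH_eq_fwd (d0 : S → ℝ) (po : S → O → ℝ) (mu : O → S → A → ℝ)
    (beta : O → S → ℝ) (P : S → A → S → ℝ) (s : ℕ → S) (a : ℕ → A)
    (n : ℕ) (o : O) :
    prOlastH d0 po mu beta P s a n o =
      mu o (s n) (a n) * fwd d0 po mu beta P s a n o * P (s n) (a n) (s (n + 1)) := by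
  cases n with
  | zero =>
    unfold prOlastH fwd w
    rw [Fintype.sum_eq_single (fun _ : Fin 1 => o)]
    · rw [Fintype.sum_unique, if_pos rfl]
      simp only [Fin.prod_univ_zero]
      ring
    · intro op hop
      have h0 : op 0 ≠ o := fun h => hop (funext fun i => by rw [Fin.eq_zero i]; exact h)
      simp [h0]
  | succ m =>
    unfold prOlastH fwd
    rw [Finset.mul_sum, Finset.sum_mul]
    refine Finset.sum_congr rfl fun op _ => ?_
    rw [Finset.mul_sum, Finset.sum_mul]
    refine Finset.sum_congr rfl fun τ _ => ?_
    rw [mul_ite, ite_mul, mul_zero, zero_mul]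
    split_ifs with h
    · unfold w
      have key : mu (op 0) (s 0) (a 0)
            * ∏ j : Fin (m + 1), mu (op j.succ) (s (j.1 + 1)) (a (j.1 + 1))
          = (∏ j : Fin (m + 1), mu (op j.castSucc) (s j.1) (a j.1))
            * mu (op (Fin.last (m + 1))) (s (m + 1)) (a (m + 1)) := by
        have h1 := Fin.prod_univ_succ (fun j : Fin (m + 2) => mu (op j) (s j.1) (a j.1))
        have h2 := Fin.prod_univ_castSucc (fun j : Fin (m + 2) => mu (op j) (s j.1) (a j.1))
        exact h1.symm.trans h2
      rw [← h]
      simp only [Finset.prod_mul_distrib]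
      linear_combination (d0 (s 0) * po (s 0) (op 0)
        * (∏ j : Fin (m + 1), P (s j.1) (a j.1) (s (j.1 + 1)))
        * (∏ j : Fin (m + 1), sel po beta s op τ j)
        * P (s (m + 1)) (a (m + 1)) (s (m + 2))) * key
    · rfl

lemma prH_eq_sum_prOlastH (d0 : S → ℝ) (po : S → O → ℝ) (mu : O → S → A → ℝ)
    (beta : O → S → ℝ) (P : S → A → S → ℝ) (s : ℕ → S) (a : ℕ → A) (n : ℕ) :
    prH d0 po mu beta P s a n = ∑ o : O, prOlastH d0 po mu beta P s a n o := by
  unfold prH prOlastH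
  symm
  rw [Finset.sum_comm]
  refine Finset.sum_congr rfl fun op _ => ?_
  rw [Finset.sum_comm]
  refine Finset.sum_congr rfl fun τ _ => ?_
  simp

/-- For a trajectory of length `t = n+1 ≥ 1` with `Pr(H_t = h) > 0`,
`Pr(O_{t-1} = o | H_t = h) = μ_o(s_{t-1},a_{t-1})·F_{t-1}(o) /
(∑_o' μ_o'(s_{t-1},a_{t-1})·F_{t-1}(o'))`; in particular the posterior does not depend
on the final transition to `s_t`. -/
theorem posterior_last_option
    (hd0 : ∀ x, 0 ≤ d0 x) (hd0s : ∑ x : S, d0 x = 1)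
    (hpo : ∀ x o, 0 ≤ po x o) (hpos : ∀ x : S, ∑ o : O, po x o = 1)
    (hmu : ∀ o x u, 0 ≤ mu o x u) (hmus : ∀ o x, ∑ u : A, mu o x u = 1)
    (hbeta : ∀ o x, 0 ≤ beta o x ∧ beta o x ≤ 1)
    (hP : ∀ x u y, 0 ≤ P x u y) (hPs : ∀ x u, ∑ y : S, P x u y = 1)
    (n : ℕ) (hH : 0 < prH d0 po mu beta P s a n) (o : O) :
    prOlastH d0 po mu beta P s a n o / prH d0 po mu beta P s a n =
      mu o (s n) (a n) * fwd d0 po mu beta P s a n o /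
        (∑ o' : O, mu o' (s n) (a n) * fwd d0 po mu beta P s a n o') := by
  have hkey := prOlastH_eq_fwd d0 po mu beta P s a n
  have hprH : prH d0 po mu beta P s a n =
      (∑ o' : O, mu o' (s n) (a n) * fwd d0 po mu beta P s a n o')
        * P (s n) (a n) (s (n + 1)) := by
    rw [prH_eq_sum_prOlastH, Finset.sum_mul]
    exact Finset.sum_congr rfl fun o' _ => hkey o'
  have hPne : P (s n) (a n) (s (n + 1)) ≠ 0 := by
    intro h0
    rw [hprH, h0, mul_zero] at hH
    exact lt_irrefl 0 hH
  rw [hkey, hprH, mul_div_mul_right _ _ hPne]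


end OptionsModel
end

section
/- In the finite options-framework model, for every trajectory h of length t ≥ 1, the trajectory probability is obtained from the forward variable at time t−1 by Pr(H_t = h) = P(s_{t-1},a_{t-1},s_t)·∑_{o ∈ O} μ_o(s_{t-1},a_{t-1})·F_{t-1}(o). -/
/-!
Finite options-framework model.

We fix finite nonempty types `S` (states), `A` (actions), `O` (options), an initial
distribution `d0`, a policy over options `po`, option policies `mu`, termination
functions `beta`, and a transition function `P`.  A trajectory of length `n+1` is
given by its states `s : ℕ → S` and actions `a : ℕ → A` (only indices `0..n+1`
resp. `0..n` are relevant).  Latent option sequences are `op : Fin (n+1) → O`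
(for `o_0,…,o_n`) and termination sequences `τ : Fin n → Bool` (for `τ_1,…,τ_n`,
where `τ j` corresponds to time `j+1`).
-/

open Finset

namespace OptionsModel

variable {S A O : Type} [Fintype S] [Fintype A] [Fintype O]
  [Nonempty S] [Nonempty A] [Nonempty O] [DecidableEq O]

variable (d0 : S → ℝ) (po : S → O → ℝ) (mu : O → S → A → ℝ)
  (beta : O → S → ℝ) (P : S → A → S → ℝ) (s : ℕ → S) (a : ℕ → A)

/-- For every trajectory of length `t = n+1 ≥ 1`,
`Pr(H_t = h) = P(s_{t-1},a_{t-1},s_t)·∑_o μ_o(s_{t-1},a_{t-1})·F_{t-1}(o)`. -/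
theorem trajectory_prob_from_forward
    (hd0 : ∀ x, 0 ≤ d0 x) (hd0s : ∑ x : S, d0 x = 1)
    (hpo : ∀ x o, 0 ≤ po x o) (hpos : ∀ x : S, ∑ o : O, po x o = 1)
    (hmu : ∀ o x u, 0 ≤ mu o x u) (hmus : ∀ o x, ∑ u : A, mu o x u = 1)
    (hbeta : ∀ o x, 0 ≤ beta o x ∧ beta o x ≤ 1)
    (hP : ∀ x u y, 0 ≤ P x u y) (hPs : ∀ x u, ∑ y : S, P x u y = 1)
    (n : ℕ) :
    prH d0 po mu beta P s a n =
      P (s n) (a n) (s (n + 1)) *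
        ∑ o : O, mu o (s n) (a n) * fwd d0 po mu beta P s a n o := by
  cases n with
  | zero =>
    simp only [prH, fwd, w, Fintype.sum_unique, Finset.univ_unique,
      Fin.prod_univ_zero, mul_one]
    rw [Finset.mul_sum]
    refine Fintype.sum_equiv (Equiv.funUnique (Fin 1) O) _ _ fun op => ?_
    simp [Equiv.funUnique]
    ring
  | succ m =>
    have key : ∀ (op : Fin (m + 2) → O) (τ : Fin (m + 1) → Bool),
        w d0 po mu beta P s a op τ
        = P (s (m + 1)) (a (m + 1)) (s (m + 2)) *
          (mu (op (Fin.last (m + 1))) (s (m + 1)) (a (m + 1)) *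
            (d0 (s 0) * po (s 0) (op 0)
              * (∏ j : Fin (m + 1),
                  mu (op j.castSucc) (s j.1) (a j.1) * P (s j.1) (a j.1) (s (j.1 + 1)))
              * (∏ j : Fin (m + 1), sel po beta s op τ j))) := by
      intro op τ
      simp only [w]
      have h1 : (mu (op 0) (s 0) (a 0)) *
          ∏ j : Fin (m + 1), mu (op j.succ) (s (j.1 + 1)) (a (j.1 + 1))
          = ∏ j : Fin (m + 2), mu (op j) (s j.1) (a j.1) := by
        conv_rhs => rw [Fin.prod_univ_succ]
        rfl
      have h2 : (∏ j : Fin (m + 2), mu (op j) (s j.1) (a j.1))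
          = (∏ j : Fin (m + 1), mu (op j.castSucc) (s j.1) (a j.1))
            * mu (op (Fin.last (m + 1))) (s (m + 1)) (a (m + 1)) := by
        rw [Fin.prod_univ_castSucc]
        simp
      rw [Finset.prod_mul_distrib, Finset.prod_mul_distrib]
      rw [Finset.prod_mul_distrib (f := fun j : Fin (m+1) =>
        mu (op j.castSucc) (s j.1) (a j.1)) (g := fun j : Fin (m+1) =>
        P (s j.1) (a j.1) (s (j.1 + 1)))]
      have h3 := h1.trans h2
      linear_combination (d0 (s 0) * po (s 0) (op 0)
        * (∏ x : Fin (m + 1), P (s x.1) (a x.1) (s (x.1 + 1)))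
        * (∏ x : Fin (m + 1), sel po beta s op τ x)
        * P (s (m + 1)) (a (m + 1)) (s (m + 2))) * h3
    calc prH d0 po mu beta P s a (m + 1)
        = ∑ op : Fin (m + 2) → O, ∑ τ : Fin (m + 1) → Bool,
            P (s (m + 1)) (a (m + 1)) (s (m + 2)) *
              (mu (op (Fin.last (m + 1))) (s (m + 1)) (a (m + 1)) *
                (d0 (s 0) * po (s 0) (op 0)
                  * (∏ j : Fin (m + 1),
                      mu (op j.castSucc) (s j.1) (a j.1) * P (s j.1) (a j.1) (s (j.1 + 1)))
                  * (∏ j : Fin (m + 1), sel po beta s op τ j))) := by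
          unfold prH
          exact Finset.sum_congr rfl fun op _ => Finset.sum_congr rfl fun τ _ => key op τ
      _ = P (s (m + 1)) (a (m + 1)) (s (m + 2)) *
            ∑ o : O, mu o (s (m + 1)) (a (m + 1)) * fwd d0 po mu beta P s a (m + 1) o := by
          rw [Finset.mul_sum]
          simp only [fwd, Finset.mul_sum, mul_ite, mul_zero]
          symm
          rw [Finset.sum_comm]
          refine Finset.sum_congr rfl fun op _ => ?_
          rw [Finset.sum_comm]
          refine Finset.sum_congr rfl fun τ _ => ?_
          rw [Finset.sum_ite_eq Finset.univ (op (Fin.last (m + 1)))]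
          simp only [Finset.mem_univ, if_true]

end OptionsModel
end

section
/- In the finite options-framework model, the forward variable satisfies the recursion: for every trajectory of length t ≥ 1 and every option o ∈ O, F_t(o) = P(s_{t-1},a_{t-1},s_t)·∑_{o' ∈ O} μ_{o'}(s_{t-1},a_{t-1})·F_{t-1}(o')·(β_{o'}(s_t)·π(s_t,o) + (1−β_{o'}(s_t))·[o = o']), where [o = o'] is 1 if o = o' and 0 otherwise. -/
/-!
Finite options-framework model.

We fix finite nonempty types `S` (states), `A` (actions), `O` (options), an initial
distribution `d0`, a policy over options `po`, option policies `mu`, termination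
functions `beta`, and a transition function `P`.  A trajectory of length `n+1` is
given by its states `s : ℕ → S` and actions `a : ℕ → A` (only indices `0..n+1`
resp. `0..n` are relevant).  Latent option sequences are `op : Fin (n+1) → O`
(for `o_0,…,o_n`) and termination sequences `τ : Fin n → Bool` (for `τ_1,…,τ_n`,
where `τ j` corresponds to time `j+1`).
-/

open Finset

namespace OptionsModel

variable {S A O : Type} [Fintype S] [Fintype A] [Fintype O]
  [Nonempty S] [Nonempty A] [Nonempty O] [DecidableEq O]

variable (d0 : S → ℝ) (po : S → O → ℝ) (mu : O → S → A → ℝ)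
  (beta : O → S → ℝ) (P : S → A → S → ℝ) (s : ℕ → S) (a : ℕ → A)

/-!
Write an option sequence `o_0,…,o_t` as a snoc of `o_0,…,o_{t-1}` and `o_t`, and likewise the
termination sequence. The summand of `F_t` then factors as the summand of `F_{t-1}` times
`μ_{o_{t-1}}(s_{t-1},a_{t-1})·P(s_{t-1},a_{t-1},s_t)·c_t`, and only `c_t` depends on `τ_t`;
summing it over `τ_t ∈ {0,1}` gives `β_{o_{t-1}}(s_t)·π(s_t,o_t) + (1−β_{o_{t-1}}(s_t))·[o_t = o_{t-1}]`.
Grouping the remaining sum by the value `o'` of `o_{t-1}` recovers `F_{t-1}(o')`.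
-/

lemma sum_fun_fin_succ_eq_sum_snoc {α M : Type*} [Fintype α] [AddCommMonoid M] {n : ℕ}
    (f : (Fin (n + 1) → α) → M) :
    ∑ g, f g = ∑ g : Fin n → α, ∑ x, f (Fin.snoc g x) := by
  rw [← (Fin.snocEquiv fun _ => α).sum_comp, Fintype.sum_prod_type_right]
  rfl

lemma sum_filter_last_eq_sum_snoc {α M : Type*} [Fintype α] [DecidableEq α] [AddCommMonoid M]
    {n : ℕ} (f : (Fin (n + 1) → α) → M) (x : α) :
    ∑ g with g (Fin.last n) = x, f g = ∑ g : Fin n → α, f (Fin.snoc g x) := by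
  rw [sum_filter, sum_fun_fin_succ_eq_sum_snoc]
  simp only [Fin.snoc_last, sum_ite_eq', mem_univ, if_true]

lemma sum_mul_sum_fiberwise {ι κ R : Type*} [Fintype κ] [DecidableEq κ] [CommSemiring R]
    (s : Finset ι) (g : ι → κ) (h : κ → R) (f : ι → R) :
    ∑ j, h j * ∑ i ∈ s with g i = j, f i = ∑ i ∈ s, h (g i) * f i := by
  rw [← sum_fiberwise s g]
  refine sum_congr rfl fun j _ => ?_
  rw [mul_sum]
  exact sum_congr rfl fun i hi => by rw [(mem_filter.1 hi).2]

def optionTransition (x : S) (o' o : O) : ℝ :=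
  beta o' x * po x o + (1 - beta o' x) * if o = o' then 1 else 0

section

omit [Fintype S] [Fintype A] [Fintype O] [Nonempty S] [Nonempty A] [Nonempty O]

lemma sel_snoc_castSucc {n : ℕ} (op : Fin (n + 1) → O) (o : O) (τ : Fin n → Bool) (b : Bool)
    (j : Fin n) :
    sel po beta s (Fin.snoc op o) (Fin.snoc τ b) j.castSucc = sel po beta s op τ j := by
  simp [sel, Fin.succ_castSucc, Fin.snoc_castSucc, -Fin.castSucc_succ]

lemma sum_sel_snoc_last {n : ℕ} (op : Fin (n + 1) → O) (o : O) (τ : Fin n → Bool) :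
    ∑ b : Bool, sel po beta s (Fin.snoc op o) (Fin.snoc τ b) (Fin.last n) =
      optionTransition po beta (s (n + 1)) (op (Fin.last n)) o := by
  simp only [sel, optionTransition, Fintype.sum_bool, Fin.snoc_last, Fin.succ_last,
    Fin.snoc_castSucc, Fin.val_last, if_true, Bool.false_eq_true, if_false]
  split_ifs <;> ring

def fwdWeight {n : ℕ} (op : Fin (n + 1) → O) (τ : Fin n → Bool) : ℝ :=
  d0 (s 0) * po (s 0) (op 0)
    * (∏ j : Fin n, mu (op j.castSucc) (s j.1) (a j.1) * P (s j.1) (a j.1) (s (j.1 + 1)))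
    * (∏ j : Fin n, sel po beta s op τ j)

lemma fwdWeight_snoc {n : ℕ} (op : Fin (n + 1) → O) (o : O) (τ : Fin n → Bool) (b : Bool) :
    fwdWeight d0 po mu beta P s a (Fin.snoc op o) (Fin.snoc τ b) =
      fwdWeight d0 po mu beta P s a op τ
        * (mu (op (Fin.last n)) (s n) (a n) * P (s n) (a n) (s (n + 1)))
        * sel po beta s (Fin.snoc op o) (Fin.snoc τ b) (Fin.last n) := by
  have h0 : (Fin.snoc op o : Fin (n + 2) → O) 0 = op 0 := Fin.snoc_castSucc (i := 0) ..
  simp only [fwdWeight, Fin.prod_univ_castSucc, sel_snoc_castSucc, Fin.snoc_castSucc,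
    Fin.val_castSucc, Fin.val_last, h0]
  ring

end

section

omit [Fintype S] [Fintype A] [Nonempty S] [Nonempty A] [Nonempty O]

lemma fwd_eq_sum_filter (n : ℕ) (o : O) :
    fwd d0 po mu beta P s a n o =
      ∑ op with op (Fin.last n) = o, ∑ τ, fwdWeight d0 po mu beta P s a op τ := by
  rw [sum_filter]
  cases n with
  | zero =>
    rw [← (Equiv.funUnique (Fin 1) O).symm.sum_comp]
    simp [fwd, fwdWeight, Fin.last]
  | succ m =>
    simp only [fwd, fwdWeight, sum_ite_irrel, sum_const_zero]

lemma fwd_succ_eq_sum_fwdWeight (n : ℕ) (o : O) :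
    fwd d0 po mu beta P s a (n + 1) o =
      ∑ op : Fin (n + 1) → O,
        P (s n) (a n) (s (n + 1)) * mu (op (Fin.last n)) (s n) (a n) *
          optionTransition po beta (s (n + 1)) (op (Fin.last n)) o *
          ∑ τ, fwdWeight d0 po mu beta P s a op τ := by
  rw [fwd_eq_sum_filter, sum_filter_last_eq_sum_snoc]
  refine sum_congr rfl fun op _ => ?_
  rw [sum_fun_fin_succ_eq_sum_snoc, mul_sum]
  refine sum_congr rfl fun τ _ => ?_
  simp only [fwdWeight_snoc, ← mul_sum, sum_sel_snoc_last]
  ring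

lemma fwd_succ_eq_sum_fwd (n : ℕ) (o : O) :
    fwd d0 po mu beta P s a (n + 1) o =
      ∑ o', P (s n) (a n) (s (n + 1)) * mu o' (s n) (a n) *
        optionTransition po beta (s (n + 1)) o' o * fwd d0 po mu beta P s a n o' := by
  rw [fwd_succ_eq_sum_fwdWeight]
  simp only [fwd_eq_sum_filter]
  rw [sum_mul_sum_fiberwise]

end

theorem forward_recursion
    (n : ℕ) (o : O) :
    fwd d0 po mu beta P s a (n + 1) o =
      P (s n) (a n) (s (n + 1)) *
        ∑ o' : O, mu o' (s n) (a n) * fwd d0 po mu beta P s a n o' *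
          (beta o' (s (n + 1)) * po (s (n + 1)) o +
            (1 - beta o' (s (n + 1))) * (if o = o' then 1 else 0)) := by
  rw [fwd_succ_eq_sum_fwd, mul_sum]
  exact sum_congr rfl fun o' _ => by rw [optionTransition]; ring

end OptionsModel
end

section
/- In the finite options-framework model, the probability that the trajectory h_t of length t ≥ 1 is observed and the option o stays active through time t (no termination at s_t) satisfies Pr(O_t = o, T_t = 0, H_t = h_t) = (1−β_o(s_t))·P(s_{t-1},a_{t-1},s_t)·μ_o(s_{t-1},a_{t-1})·F_{t-1}(o). -/
/-!
Finite options-framework model.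

We fix finite nonempty types `S` (states), `A` (actions), `O` (options), an initial
distribution `d0`, a policy over options `po`, option policies `mu`, termination
functions `beta`, and a transition function `P`.  A trajectory of length `n+1` is
given by its states `s : ℕ → S` and actions `a : ℕ → A` (only indices `0..n+1`
resp. `0..n` are relevant).  Latent option sequences are `op : Fin (n+1) → O`
(for `o_0,…,o_n`) and termination sequences `τ : Fin n → Bool` (for `τ_1,…,τ_n`,
where `τ j` corresponds to time `j+1`).
-/

open Finset

namespace OptionsModel

variable {S A O : Type} [Fintype S] [Fintype A] [Fintype O]
  [Nonempty S] [Nonempty A] [Nonempty O] [DecidableEq O]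

variable (d0 : S → ℝ) (po : S → O → ℝ) (mu : O → S → A → ℝ)
  (beta : O → S → ℝ) (P : S → A → S → ℝ) (s : ℕ → S) (a : ℕ → A)

lemma sum_snoc {α : Type} [Fintype α] {k : ℕ} (F : (Fin (k + 1) → α) → ℝ) :
    ∑ f : Fin (k + 1) → α, F f = ∑ g : Fin k → α, ∑ x : α, F (Fin.snoc g x) := by
  rw [← Equiv.sum_comp (Fin.snocEquiv fun _ => α) F, Fintype.sum_prod_type, Finset.sum_comm]
  rfl

lemma sel_snoc {k : ℕ} (g : Fin (k + 1) → O) (x : O) (τ' : Fin k → Bool) (b : Bool)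
    (j : Fin k) :
    sel po beta s (Fin.snoc g x) (Fin.snoc τ' b) j.castSucc = sel po beta s g τ' j := by
  simp only [sel, Fin.snoc_castSucc, Fin.coe_castSucc, Fin.succ_castSucc]

lemma fwd_eq (n : ℕ) (o : O) :
    fwd d0 po mu beta P s a n o =
      ∑ op : Fin (n + 1) → O, ∑ τ : Fin n → Bool,
        if op (Fin.last n) = o then
          d0 (s 0) * po (s 0) (op 0)
            * (∏ j : Fin n,
                mu (op j.castSucc) (s j.1) (a j.1) * P (s j.1) (a j.1) (s (j.1 + 1)))
            * (∏ j : Fin n, sel po beta s op τ j)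
        else 0 := by
  cases n with
  | zero =>
    rw [fwd, sum_snoc]
    have h0 : ∀ (g : Fin 0 → O) (x : O), (Fin.snoc g x : Fin 1 → O) 0 = x := fun g x => by
      rw [show (0 : Fin 1) = Fin.last 0 from rfl, Fin.snoc_last]
    simp [h0, Finset.sum_ite_eq', show Fin.last 0 = 0 from rfl]
  | succ m => rfl


lemma snoc_zero' {α : Type} {k : ℕ} (g : Fin (k + 1) → α) (x : α) :
    (Fin.snoc g x : Fin (k + 2) → α) 0 = g 0 := by
  rw [← Fin.castSucc_zero, Fin.snoc_castSucc]

/-- For `t = n+1 ≥ 1`, the probability that the trajectory is observed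
and option `o` stays active through time `t` satisfies
`Pr(O_t = o, T_t = 0, H_t = h_t) = (1−β_o(s_t))·P(s_{t-1},a_{t-1},s_t)·μ_o(s_{t-1},a_{t-1})·F_{t-1}(o)`. -/
theorem no_termination_joint_prob
    (hd0 : ∀ x, 0 ≤ d0 x) (hd0s : ∑ x : S, d0 x = 1)
    (hpo : ∀ x o, 0 ≤ po x o) (hpos : ∀ x : S, ∑ o : O, po x o = 1)
    (hmu : ∀ o x u, 0 ≤ mu o x u) (hmus : ∀ o x, ∑ u : A, mu o x u = 1)
    (hbeta : ∀ o x, 0 ≤ beta o x ∧ beta o x ≤ 1)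
    (hP : ∀ x u y, 0 ≤ P x u y) (hPs : ∀ x u, ∑ y : S, P x u y = 1)
    (n : ℕ) (o : O) :
    prOT0H d0 po mu beta P s a n o =
      (1 - beta o (s (n + 1))) * P (s n) (a n) (s (n + 1)) * mu o (s n) (a n) *
        fwd d0 po mu beta P s a n o := by
  rw [prOT0H, fwd_eq, sum_snoc, Finset.mul_sum]
  refine Finset.sum_congr rfl fun g _ => ?_
  rw [Finset.mul_sum]
  simp only [sum_snoc (k := n) (α := Bool)]
  simp only [Fin.snoc_last, Fintype.sum_bool, Bool.true_eq_false, and_false, if_false,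
    Finset.sum_const_zero, zero_add, and_true]
  rw [Finset.sum_comm]
  refine Finset.sum_congr rfl fun τ' _ => ?_
  rw [Finset.sum_ite_eq' Finset.univ o]
  simp only [Finset.mem_univ, if_true]
  have hsel : sel po beta s (Fin.snoc g o) (Fin.snoc τ' false) (Fin.last n) =
      if o = g (Fin.last n) then 1 - beta (g (Fin.last n)) (s (n + 1)) else 0 := by
    simp [sel, Fin.succ_last, Fin.snoc_last, Fin.snoc_castSucc, Fin.val_last]
  rw [snoc_zero', Fin.prod_univ_castSucc, Fin.prod_univ_castSucc
    (f := fun j => sel po beta s (Fin.snoc g o) (Fin.snoc τ' false) j), hsel]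
  simp only [Fin.snoc_castSucc, Fin.coe_castSucc, Fin.snoc_last, Fin.val_last, sel_snoc]
  by_cases h : g (Fin.last n) = o
  · rw [if_pos h, h, if_pos rfl]
    ring
  · rw [if_neg h, if_neg (fun he => h he.symm), mul_zero, mul_zero, mul_zero]

end OptionsModel
end

section
/- In the finite options-framework model, for every trajectory h of length t ≥ 1, the probability of generating h is given by the recursive formula Pr(H_t = h) = d0(s_0)·(∑_{o ∈ O} π(s_0,o)·μ_o(s_0,a_0)·f(h,o,1))·∏_{k=0}^{t-1} P(s_k,a_k,s_{k+1}), where f is the recursive function defined in the context. -/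
/-!
Finite options-framework model.

We fix finite nonempty types `S` (states), `A` (actions), `O` (options), an initial
distribution `d0`, a policy over options `po`, option policies `mu`, termination
functions `beta`, and a transition function `P`.  A trajectory of length `n+1` is
given by its states `s : ℕ → S` and actions `a : ℕ → A` (only indices `0..n+1`
resp. `0..n` are relevant).  Latent option sequences are `op : Fin (n+1) → O`
(for `o_0,…,o_n`) and termination sequences `τ : Fin n → Bool` (for `τ_1,…,τ_n`,
where `τ j` corresponds to time `j+1`).
-/

open Finset

namespace OptionsModel

variable {S A O : Type} [Fintype S] [Fintype A] [Fintype O]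
  [Nonempty S] [Nonempty A] [Nonempty O] [DecidableEq O]

variable (d0 : S → ℝ) (po : S → O → ℝ) (mu : O → S → A → ℝ)
  (beta : O → S → ℝ) (P : S → A → S → ℝ) (s : ℕ → S) (a : ℕ → A)

lemma fRec_shift (po : S → O → ℝ) (mu : O → S → A → ℝ) (beta : O → S → ℝ)
    (s : ℕ → S) (a : ℕ → A) :
    ∀ (d t i : ℕ), t ≤ i + d → ∀ o,
      fRec po mu beta (fun k => s (k+1)) (fun k => a (k+1)) t o i
        = fRec po mu beta s a (t+1) o (i+1) := by
  intro d
  induction d with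
  | zero =>
    intro t i h o
    simp only [Nat.add_zero] at h
    conv_lhs => rw [fRec]
    conv_rhs => rw [fRec]
    rw [dif_pos h, dif_pos (by omega)]
  | succ d ih =>
    intro t i h o
    by_cases hti : t ≤ i
    · conv_lhs => rw [fRec]
      conv_rhs => rw [fRec]
      rw [dif_pos hti, dif_pos (by omega)]
    · conv_lhs => rw [fRec]
      conv_rhs => rw [fRec]
      rw [dif_neg hti, dif_neg (show ¬ t + 1 ≤ i + 1 by omega)]
      simp only [ih t (i+1) (by omega)]

lemma sel_cons_succ (po : S → O → ℝ) (beta : O → S → ℝ) (s : ℕ → S) {m : ℕ}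
    (o0 : O) (op : Fin (m+1) → O) (τ0 : Bool) (τ : Fin m → Bool) (i : Fin m) :
    sel po beta s (Fin.cons o0 op) (Fin.cons τ0 τ) i.succ
      = sel po beta (fun k => s (k+1)) op τ i := by
  simp only [sel, ← Fin.succ_castSucc, Fin.cons_succ]
  rfl


lemma key (po : S → O → ℝ) (mu : O → S → A → ℝ) (beta : O → S → ℝ) :
    ∀ (m : ℕ) (g : O → ℝ) (s : ℕ → S) (a : ℕ → A),
      (∑ op : Fin (m+1) → O, ∑ τ : Fin m → Bool,
        g (op 0) * mu (op 0) (s 0) (a 0)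
          * ∏ j : Fin m, sel po beta s op τ j * mu (op j.succ) (s (j.1+1)) (a (j.1+1)))
      = ∑ o : O, g o * mu o (s 0) (a 0) * fRec po mu beta s a (m+1) o 1 := by
  intro m
  induction m with
  | zero =>
    intro g s a
    have h1 : ∀ o : O, fRec po mu beta s a 1 o 1 = 1 := by
      intro o; rw [fRec]; simp
    simp only [h1, Finset.univ_unique, Finset.sum_singleton]
    rw [← (Equiv.funUnique (Fin 1) O).symm.sum_comp]
    simp
  | succ m ih =>
    intro g s a
    -- decompose op and τ sums
    rw [← (Fin.consEquiv (fun _ : Fin (m+2) => O)).sum_comp, Fintype.sum_prod_type]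
    refine Finset.sum_congr rfl (fun o0 _ => ?_)
    have hτ : ∀ (F : (Fin (m+1) → Bool) → ℝ),
        ∑ τ : Fin (m+1) → Bool, F τ
          = ∑ τ0 : Bool, ∑ τ : Fin m → Bool, F (Fin.cons τ0 τ) := by
      intro F
      rw [← (Fin.consEquiv (fun _ : Fin (m+1) => Bool)).sum_comp, Fintype.sum_prod_type]
      rfl
    simp only [hτ]
    have hce : ∀ x : Fin (m+1) → O,
        (Fin.consEquiv fun _ : Fin (m+2) => O) (o0, x) = Fin.cons o0 x := fun _ => rfl
    simp only [hce]
    simp only [Fin.consEquiv_apply, Fin.cons_zero, Fin.prod_univ_succ, sel_cons_succ,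
      Fin.cons_succ, ← Fin.succ_zero_eq_one, Fin.val_succ, Fin.val_zero, Fintype.sum_bool]
    have hsel0 : ∀ (x : Fin (m+1) → O) (τ0 : Bool) (τ : Fin m → Bool),
        sel po beta s (Fin.cons o0 x) (Fin.cons τ0 τ) 0
          = if τ0 then beta o0 (s 1) * po (s 1) (x 0)
            else if x 0 = o0 then 1 - beta o0 (s 1) else 0 := by
      intro x τ0 τ
      simp [sel]
    simp only [hsel0, if_true, if_false, Bool.false_eq_true, ite_false, ite_true]
    conv_rhs => rw [fRec]
    rw [dif_neg (by omega : ¬ m + 1 + 1 ≤ 1)]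
    have hsh : ∀ o : O, fRec po mu beta s a (m + 1 + 1) o (1 + 1)
        = fRec po mu beta (fun k => s (k+1)) (fun k => a (k+1)) (m+1) o 1 :=
      fun o => (fRec_shift po mu beta s a (m+1) (m+1) 1 (by omega) o).symm
    simp only [hsh]
    have e1 := ih (fun o' => po (s 1) o') (fun k => s (k+1)) (fun k => a (k+1))
    have e2 := ih (fun o' => if o' = o0 then (1:ℝ) else 0) (fun k => s (k+1)) (fun k => a (k+1))
    simp only [Nat.zero_add, ite_mul, one_mul, zero_mul, Finset.sum_ite_eq',
      Finset.mem_univ, if_true] at e1 e2 ⊢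
    rw [← e1, mul_assoc (1 - beta o0 (s 1)) (mu o0 (s 1) (a 1)), ← e2]
    simp only [mul_add, Finset.mul_sum, ← Finset.sum_add_distrib]
    refine Finset.sum_congr rfl fun x _ => ?_
    refine Finset.sum_congr rfl fun τ _ => ?_
    split_ifs <;> ring


/-- For every trajectory of length `t = n+1 ≥ 1`,
`Pr(H_t = h) = d0(s_0)·(∑_o π(s_0,o)·μ_o(s_0,a_0)·f(h,o,1))·∏_{k=0}^{t-1} P(s_k,a_k,s_{k+1})`. -/
theorem trajectory_prob_recursive_formula
    (hd0 : ∀ x, 0 ≤ d0 x) (hd0s : ∑ x : S, d0 x = 1)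
    (hpo : ∀ x o, 0 ≤ po x o) (hpos : ∀ x : S, ∑ o : O, po x o = 1)
    (hmu : ∀ o x u, 0 ≤ mu o x u) (hmus : ∀ o x, ∑ u : A, mu o x u = 1)
    (hbeta : ∀ o x, 0 ≤ beta o x ∧ beta o x ≤ 1)
    (hP : ∀ x u y, 0 ≤ P x u y) (hPs : ∀ x u, ∑ y : S, P x u y = 1)
    (n : ℕ) :
    prH d0 po mu beta P s a n =
      d0 (s 0) * (∑ o : O, po (s 0) o * mu o (s 0) (a 0) * fRec po mu beta s a (n + 1) o 1) *
        ∏ k ∈ Finset.range (n + 1), P (s k) (a k) (s (k + 1)) := by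
  have hkey := key po mu beta n (po (s 0)) s a
  have hprod : ∀ (op : Fin (n+1) → O) (τ : Fin n → Bool),
      (∏ j : Fin n, P (s j.1) (a j.1) (s (j.1+1)) * sel po beta s op τ j
          * mu (op j.succ) (s (j.1+1)) (a (j.1+1)))
        = (∏ j : Fin n, P (s j.1) (a j.1) (s (j.1+1)))
          * ∏ j : Fin n, sel po beta s op τ j * mu (op j.succ) (s (j.1+1)) (a (j.1+1)) := by
    intro op τ
    rw [← Finset.prod_mul_distrib]
    exact Finset.prod_congr rfl fun j _ => by ring
  have hC : (∏ j : Fin n, P (s j.1) (a j.1) (s (j.1+1))) * P (s n) (a n) (s (n+1))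
      = ∏ k ∈ Finset.range (n+1), P (s k) (a k) (s (k+1)) := by
    rw [Finset.prod_range_succ]
    congr 1
    exact Fin.prod_univ_eq_prod_range (fun k => P (s k) (a k) (s (k+1))) n
  simp only [prH, w, hprod]
  rw [← hC, ← hkey]
  simp only [Finset.mul_sum, Finset.sum_mul]
  refine Finset.sum_congr rfl fun op _ => ?_
  refine Finset.sum_congr rfl fun τ _ => ?_
  ring

end OptionsModel
end

section
/- In the finite options-framework model, the suffix probability satisfies the recursion: for every trajectory h of length t, every option o ∈ O, and every 1 ≤ i < t, G(h,o,i) = P(s_{i-1},a_{i-1},s_i)·(β_o(s_i)·∑_{o' ∈ O} π(s_i,o')·μ_{o'}(s_i,a_i)·G(h,o',i+1) + (1−β_o(s_i))·μ_o(s_i,a_i)·G(h,o,i+1)). -/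
/-!
Finite options-framework model.

We fix finite nonempty types `S` (states), `A` (actions), `O` (options), an initial
distribution `d0`, a policy over options `po`, option policies `mu`, termination
functions `beta`, and a transition function `P`.  A trajectory of length `n+1` is
given by its states `s : ℕ → S` and actions `a : ℕ → A` (only indices `0..n+1`
resp. `0..n` are relevant).  Latent option sequences are `op : Fin (n+1) → O`
(for `o_0,…,o_n`) and termination sequences `τ : Fin n → Bool` (for `τ_1,…,τ_n`,
where `τ j` corresponds to time `j+1`).
-/

open Finset

namespace OptionsModel

variable {S A O : Type} [Fintype S] [Fintype A] [Fintype O]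
  [Nonempty S] [Nonempty A] [Nonempty O] [DecidableEq O]

lemma prevOp_cons_zero {k : ℕ} (o o' : O) (op : Fin k → O) :
    prevOp o (Fin.cons o' op) (0 : Fin (k+1)) = o := by simp [prevOp]

lemma prevOp_cons_succ {k : ℕ} (o o' : O) (op : Fin k → O) (j : Fin k) :
    prevOp o (Fin.cons o' op) j.succ = prevOp o' op j := by
  rcases j with ⟨jv, hj⟩
  unfold prevOp
  rcases jv with _ | m
  · simp
  · simp only [Fin.val_succ]
    rw [dif_neg (by omega), dif_neg (by omega)]
    have : (⟨m + 1 + 1 - 1, by omega⟩ : Fin (k+1)) = Fin.succ ⟨m, by omega⟩ := rfl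
    rw [this, Fin.cons_succ]
    exact congrArg op (Fin.ext (by simp))

lemma sum_cons_bool {M : Type*} [AddCommMonoid M] {k : ℕ} (F : (Fin (k+1) → Bool) → M) :
    ∑ τ : Fin (k+1) → Bool, F τ = ∑ b : Bool, ∑ τ' : Fin k → Bool, F (Fin.cons b τ') := by
  rw [← Equiv.sum_comp (Fin.consEquiv (fun _ : Fin (k+1) => Bool)) F, Fintype.sum_prod_type]
  rfl

variable (d0 : S → ℝ) (po : S → O → ℝ) (mu : O → S → A → ℝ)
  (beta : O → S → ℝ) (P : S → A → S → ℝ) (s : ℕ → S) (a : ℕ → A)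

/-- The suffix-probability recursion: for every trajectory of length
`t`, every option `o` and every `1 ≤ i < t`,
`G(h,o,i) = P(s_{i-1},a_{i-1},s_i)·(β_o(s_i)·∑_o' π(s_i,o')·μ_o'(s_i,a_i)·G(h,o',i+1)
+ (1−β_o(s_i))·μ_o(s_i,a_i)·G(h,o,i+1))`. -/
theorem suffix_prob_recursion
    (hd0 : ∀ x, 0 ≤ d0 x) (hd0s : ∑ x : S, d0 x = 1)
    (hpo : ∀ x o, 0 ≤ po x o) (hpos : ∀ x : S, ∑ o : O, po x o = 1)
    (hmu : ∀ o x u, 0 ≤ mu o x u) (hmus : ∀ o x, ∑ u : A, mu o x u = 1)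
    (hbeta : ∀ o x, 0 ≤ beta o x ∧ beta o x ≤ 1)
    (hP : ∀ x u y, 0 ≤ P x u y) (hPs : ∀ x u, ∑ y : S, P x u y = 1)
    (t i : ℕ) (hi1 : 1 ≤ i) (hit : i < t) (o : O) :
    G po mu beta P s a t i o =
      P (s (i - 1)) (a (i - 1)) (s i) *
        (beta o (s i) *
            ∑ o' : O, po (s i) o' * mu o' (s i) (a i) * G po mu beta P s a t (i + 1) o' +
          (1 - beta o (s i)) * mu o (s i) (a i) * G po mu beta P s a t (i + 1) o) := by
  obtain ⟨k, hk⟩ : ∃ k, t - i = k + 1 := ⟨t - i - 1, by omega⟩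
  have hk' : t - (i + 1) = k := by omega
  have hG : ∀ o' : O, G po mu beta P s a t (i+1) o' =
      ∑ op : Fin k → O, ∑ τ : Fin k → Bool,
        (∏ j : Fin k,
            P (s (i + 1 + j.1 - 1)) (a (i + 1 + j.1 - 1)) (s (i + 1 + j.1))
              * (if τ j then beta (prevOp o' op j) (s (i + 1 + j.1)) * po (s (i + 1 + j.1)) (op j)
                else if op j = prevOp o' op j then 1 - beta (prevOp o' op j) (s (i + 1 + j.1)) else 0)
              * mu (op j) (s (i + 1 + j.1)) (a (i + 1 + j.1)))
          * P (s (t - 1)) (a (t - 1)) (s t) := by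
    intro o'
    rcases Nat.eq_zero_or_pos k with hk0 | hk0
    · subst hk0
      rw [G, if_neg (by omega)]
      simp
    · rw [G, if_pos (by omega), hk']
  rw [G, if_pos hit, hk]
  rw [← Equiv.sum_comp (Fin.consEquiv (fun _ : Fin (k+1) => O)), Fintype.sum_prod_type]
  have peel : ∀ (o₁ : O) (op : Fin k → O) (τ : Fin (k+1) → Bool),
      (∏ j : Fin (k+1),
          P (s (i + j.1 - 1)) (a (i + j.1 - 1)) (s (i + j.1))
            * (if τ j then
                beta (prevOp o (Fin.consEquiv (fun _ => O) (o₁, op)) j) (s (i + j.1)) * po (s (i + j.1)) ((Fin.consEquiv (fun _ => O) (o₁, op)) j)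
              else if (Fin.consEquiv (fun _ => O) (o₁, op)) j = prevOp o (Fin.consEquiv (fun _ => O) (o₁, op)) j then 1 - beta (prevOp o (Fin.consEquiv (fun _ => O) (o₁, op)) j) (s (i + j.1))
              else 0)
            * mu ((Fin.consEquiv (fun _ => O) (o₁, op)) j) (s (i + j.1)) (a (i + j.1))) =
      (P (s (i - 1)) (a (i - 1)) (s i)
          * (if τ 0 then beta o (s i) * po (s i) o₁
             else if o₁ = o then 1 - beta o (s i) else 0)
          * mu o₁ (s i) (a i))
        * ∏ j : Fin k,
            P (s (i + 1 + j.1 - 1)) (a (i + 1 + j.1 - 1)) (s (i + 1 + j.1))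
              * (if τ j.succ then beta (prevOp o₁ op j) (s (i + 1 + j.1)) * po (s (i + 1 + j.1)) (op j)
                else if op j = prevOp o₁ op j then 1 - beta (prevOp o₁ op j) (s (i + 1 + j.1)) else 0)
              * mu (op j) (s (i + 1 + j.1)) (a (i + 1 + j.1)) := by
    intro o₁ op τ
    rw [Fin.prod_univ_succ]
    refine congrArg₂ (· * ·) ?_ ?_
    · simp [prevOp_cons_zero, Fin.consEquiv]
    · apply Finset.prod_congr rfl
      intro j _
      have e2 : i + (j.1 + 1) = i + 1 + j.1 := by omega
      rw [show ((Fin.consEquiv (fun _ => O)) (o₁, op) : Fin (k+1) → O) = Fin.cons o₁ op from rfl]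
      rw [Fin.cons_succ, prevOp_cons_succ, Fin.val_succ, e2]
  simp only [peel]
  have key : ∀ o₁ : O,
      (∑ op : Fin k → O, ∑ τ : Fin (k+1) → Bool,
        ((P (s (i-1)) (a (i-1)) (s i)
            * (if τ 0 then beta o (s i) * po (s i) o₁ else if o₁ = o then 1 - beta o (s i) else 0)
            * mu o₁ (s i) (a i))
          * ∏ j : Fin k,
              P (s (i + 1 + j.1 - 1)) (a (i + 1 + j.1 - 1)) (s (i + 1 + j.1))
                * (if τ j.succ then beta (prevOp o₁ op j) (s (i + 1 + j.1)) * po (s (i + 1 + j.1)) (op j)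
                  else if op j = prevOp o₁ op j then 1 - beta (prevOp o₁ op j) (s (i + 1 + j.1)) else 0)
                * mu (op j) (s (i + 1 + j.1)) (a (i + 1 + j.1))) * P (s (t-1)) (a (t-1)) (s t))
      = (P (s (i-1)) (a (i-1)) (s i) * (beta o (s i) * po (s i) o₁) * mu o₁ (s i) (a i))
          * G po mu beta P s a t (i+1) o₁
        + (P (s (i-1)) (a (i-1)) (s i) * (if o₁ = o then 1 - beta o (s i) else 0) * mu o₁ (s i) (a i))
          * G po mu beta P s a t (i+1) o₁ := by
    intro o₁
    rw [hG o₁, Finset.mul_sum, Finset.mul_sum, ← Finset.sum_add_distrib]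
    apply Finset.sum_congr rfl; intro op _
    rw [sum_cons_bool, Fintype.sum_bool, Finset.mul_sum, Finset.mul_sum]
    refine congrArg₂ (· + ·) (Finset.sum_congr rfl fun τ' _ => ?_) (Finset.sum_congr rfl fun τ' _ => ?_)
    · simp only [Fin.cons_zero, Fin.cons_succ, if_true]; ring
    · simp only [Fin.cons_zero, Fin.cons_succ, Bool.false_eq_true, if_false]; ring
  simp only [key]
  rw [Finset.sum_add_distrib]
  have collapse : (∑ o₁ : O,
      (P (s (i-1)) (a (i-1)) (s i) * (if o₁ = o then 1 - beta o (s i) else 0) * mu o₁ (s i) (a i))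
        * G po mu beta P s a t (i+1) o₁)
      = (P (s (i-1)) (a (i-1)) (s i) * (1 - beta o (s i)) * mu o (s i) (a i))
          * G po mu beta P s a t (i+1) o := by
    simp [mul_ite, ite_mul, zero_mul, mul_zero, Finset.sum_ite_eq']
  rw [collapse, mul_add]
  refine congrArg₂ (· + ·) ?_ ?_
  · rw [Finset.mul_sum, Finset.mul_sum]
    exact Finset.sum_congr rfl fun o₁ _ => by ring
  · ring


end OptionsModel
end
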